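/- arXiv:2012.05845 — 7 statements merged into one kernel-verified Lean document; each statement's English description precedes it below -/
import Mathlib

section
/- For any permutation σ ∈ S_n, any transposition τ, and any i ≥ 1, the i-th row length of the RSK shape satisfies |Σ_{k=1}^{i} λ_k(σ) − Σ_{k=1}^{i} λ_k(σ∘τ)| ≤ 2. -/
open Finset
open scoped Classical

/-- `greeneSum σ k` is the maximal cardinality of a subset of `Fin n` which is a union of
`k` increasing subsequences of `σ`.  By Greene's theorem, this equals
`λ₁(σ) + ⋯ + λ_k(σ)`, the sum of the first `k` rows of the RSK shape of `σ`. -/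
noncomputable def greeneSum {n : ℕ} (σ : Equiv.Perm (Fin n)) (k : ℕ) : ℕ :=
  Finset.sup ((Finset.univ : Finset (Finset (Fin n))).filter
    (fun s => ∃ t : Fin k → Finset (Fin n), s = Finset.univ.biUnion t ∧
      ∀ a : Fin k, ∀ i ∈ t a, ∀ j ∈ t a, i < j → σ i < σ j)) Finset.card

lemma greeneSum_le_mul_swap_add_two {n : ℕ} (σ : Equiv.Perm (Fin n)) (a b : Fin n) (k : ℕ) :
    greeneSum σ k ≤ greeneSum (σ * Equiv.swap a b) k + 2 := by
  apply Finset.sup_le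
  intro s hs
  simp only [Finset.mem_filter, Finset.mem_univ, true_and] at hs
  obtain ⟨t, rfl, ht⟩ := hs
  set s : Finset (Fin n) := Finset.univ.biUnion t with hs
  have hmem : s \ {a, b} ∈ ((Finset.univ : Finset (Finset (Fin n))).filter
      (fun u => ∃ t : Fin k → Finset (Fin n), u = Finset.univ.biUnion t ∧
        ∀ c : Fin k, ∀ i ∈ t c, ∀ j ∈ t c, i < j → (σ * Equiv.swap a b) i < (σ * Equiv.swap a b) j)) := by
    simp only [Finset.mem_filter, Finset.mem_univ, true_and]
    refine ⟨fun c => t c \ {a, b}, ?_, ?_⟩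
    · ext x
      simp [hs, and_comm]
    · intro c i hi j hj hij
      simp only [Finset.mem_sdiff, Finset.mem_insert, Finset.mem_singleton, not_or] at hi hj
      have hi' : (σ * Equiv.swap a b) i = σ i := by
        simp [Equiv.Perm.mul_apply, Equiv.swap_apply_of_ne_of_ne hi.2.1 hi.2.2]
      have hj' : (σ * Equiv.swap a b) j = σ j := by
        simp [Equiv.Perm.mul_apply, Equiv.swap_apply_of_ne_of_ne hj.2.1 hj.2.2]
      rw [hi', hj']
      exact ht c i hi.1 j hj.1 hij
  have h1 : (s \ {a, b}).card ≤ greeneSum (σ * Equiv.swap a b) k := Finset.le_sup hmem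
  have h2 : s.card ≤ (s \ {a, b}).card + ({a, b} : Finset (Fin n)).card :=
    Finset.card_le_card_sdiff_add_card
  have h3 : ({a, b} : Finset (Fin n)).card ≤ 2 := Finset.card_insert_le a {b}
  omega

/-- Right-composition with a transposition changes `λ₁ + ⋯ + λ_i` by at most 2. -/
theorem greeneSum_mul_swap_diff_le_two {n : ℕ} (σ : Equiv.Perm (Fin n)) (a b : Fin n)
    (hab : a ≠ b) (i : ℕ) (hi : 1 ≤ i) :
    |(greeneSum σ i : ℤ) - (greeneSum (σ * Equiv.swap a b) i : ℤ)| ≤ 2 := by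
  have h1 := greeneSum_le_mul_swap_add_two σ a b i
  have h2 := greeneSum_le_mul_swap_add_two (σ * Equiv.swap a b) a b i
  rw [mul_assoc, Equiv.swap_mul_self, mul_one] at h2
  rw [abs_le]
  constructor <;> [skip; skip] <;> omega
end

section
/- For any permutation σ ∈ S_n, LAS(σ) = 1 + Σ_{k=1}^{n−1} M_k(σ), where M_1(σ) = 1 if σ(1) > σ(2) and 0 otherwise, and for 1 < k < n, M_k(σ) = 1_{σ(k−1)>σ(k)<σ(k+1)} + 1_{σ(k−1)<σ(k)>σ(k+1)}. -/
open Finset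
open scoped Classical

/-- `LAS σ` is the maximal length of an alternating subsequence of `σ`:
indices `i₁ < i₂ < ⋯ < i_k` with `σ(i₁) > σ(i₂) < σ(i₃) > ⋯`. -/
noncomputable def LAS {n : ℕ} (σ : Equiv.Perm (Fin n)) : ℕ :=
  sSup {k | ∃ l : List (Fin n), l.Chain' (· < ·) ∧
    (∀ t : ℕ, ∀ ht : t + 1 < l.length,
      if Even t then σ (l[t+1]'ht) < σ (l[t]'(Nat.lt_of_succ_lt ht))
      else σ (l[t]'(Nat.lt_of_succ_lt ht)) < σ (l[t+1]'ht)) ∧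
    l.length = k}

/-- The value `σ(i)` (1-indexed, with values in `{1,…,n}`), with the convention
`σ(i) = 0` for `i` outside `{1,…,n}`. -/
def ap {n : ℕ} (σ : Equiv.Perm (Fin n)) (i : ℕ) : ℕ :=
  if h : 1 ≤ i ∧ i ≤ n then (σ ⟨i - 1, by omega⟩ : ℕ) + 1 else 0

/-- The local summand `M_k(σ)`. -/
def Mstat {n : ℕ} (σ : Equiv.Perm (Fin n)) (k : ℕ) : ℕ :=
  if k = 1 then (if ap σ 2 < ap σ 1 then 1 else 0)
  else (if ap σ k < ap σ (k - 1) ∧ ap σ k < ap σ (k + 1) then 1 else 0)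
    + (if ap σ (k - 1) < ap σ k ∧ ap σ (k + 1) < ap σ k then 1 else 0)

/-!
Put `r(m) = 1 + ∑_{k<m} M_k` for a sequence `f(1), …, f(n)` with distinct neighbours.
Since `M_k` records a change of direction at `k` (and `M_1` an initial descent),
`r(m)` is even exactly when the step into `m` goes down.

Upper bound: the `t`-th term `i_t` of an alternating subsequence satisfies `t ≤ r(i_t)`.
Between `i_t` and `i_{t+1}` the sequence takes a unit step `j - 1 → j` in the direction
required of the `t`-th step, so `r(j)` has the parity of `t + 1`; as `r(j) ≥ r(i_t) ≥ t`,
this forces `t + 1 ≤ r(j) ≤ r(i_{t+1})`.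

Lower bound: an alternating subsequence of length `r(m)` ending at `m` is turned into one of
length `r(m+1)` ending at `m + 1` by appending `m + 1` if `m` is a turn, and by replacing its
last term by `m + 1` otherwise.
-/

section Alternating

variable {α : Type*} [LinearOrder α] (f : ℕ → α)

/-- `M_k` for an arbitrary sequence `f`, so that `Mstat σ` is `turnAt (ap σ)` by definition. -/
def turnAt (k : ℕ) : ℕ :=
  if k = 1 then (if f 2 < f 1 then 1 else 0)
  else (if f k < f (k - 1) ∧ f k < f (k + 1) then 1 else 0)
    + (if f (k - 1) < f k ∧ f (k + 1) < f k then 1 else 0)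

def turnSum (m : ℕ) : ℕ := 1 + ∑ k ∈ Icc 1 (m - 1), turnAt f k

def StepsDown (m : ℕ) : Prop := 1 < m ∧ f m < f (m - 1)

def IsAltStep (t a b : ℕ) : Prop := a < b ∧ if Even t then f b < f a else f a < f b

def IsAlternating (l : List ℕ) : Prop :=
  ∀ t (ht : t + 1 < l.length), IsAltStep f t l[t] l[t + 1]

variable {f}

lemma turnAt_eq_ite {n : ℕ} (hf : ∀ j, 1 ≤ j → j < n → f j ≠ f (j + 1)) {k : ℕ}
    (hk : 1 ≤ k) (hkn : k < n) :
    turnAt f k = if (StepsDown f k ↔ f (k + 1) < f k) then 0 else 1 := by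
  unfold turnAt StepsDown
  rcases hk.eq_or_lt with rfl | hk
  · by_cases h : f 2 < f 1 <;> simp [h]
  · have hpred : f (k - 1) ≠ f k := by
      simpa [Nat.sub_add_cancel hk.le] using hf (k - 1) (by omega) (by omega)
    rcases hpred.lt_or_gt with h₁ | h₁ <;> rcases (hf k hk.le hkn).lt_or_gt with h₂ | h₂ <;>
      simp [hk, hk.ne', h₁, h₂, h₁.not_gt, h₂.not_gt]

lemma turnSum_one : turnSum f 1 = 1 := by simp [turnSum]

lemma turnSum_succ {m : ℕ} (hm : 1 ≤ m) : turnSum f (m + 1) = turnSum f m + turnAt f m := by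
  obtain ⟨m, rfl⟩ := Nat.exists_eq_add_of_le' hm
  simp only [turnSum, Nat.add_sub_cancel, sum_Icc_succ_top (by omega : 1 ≤ m + 1)]
  ring

lemma turnSum_mono : Monotone (turnSum f) := fun _ _ h =>
  Nat.add_le_add_left (sum_le_sum_of_subset (Icc_subset_Icc_right (by omega))) 1

lemma one_le_turnSum (m : ℕ) : 1 ≤ turnSum f m := Nat.le_add_right 1 _

lemma even_turnSum_iff {n : ℕ} (hf : ∀ j, 1 ≤ j → j < n → f j ≠ f (j + 1)) {m : ℕ}
    (hm : 1 ≤ m) (hmn : m ≤ n) : Even (turnSum f m) ↔ StepsDown f m := by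
  induction m, hm using Nat.le_induction with
  | base => simp [turnSum_one, StepsDown]
  | succ m hm ih =>
    rw [turnSum_succ hm, turnAt_eq_ite hf hm (by omega), ← ih (by omega)]
    simp only [StepsDown, Nat.add_sub_cancel, show 1 < m + 1 by omega, true_and]
    split_ifs <;> simp only [add_zero, Nat.even_add_one] <;> tauto

lemma IsAltStep.trans {t a b c : ℕ} (hab : IsAltStep f t a b) (hbc : IsAltStep f t b c) :
    IsAltStep f t a c := by
  refine ⟨hab.1.trans hbc.1, ?_⟩
  have := hab.2
  have := hbc.2
  split_ifs at * <;> order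

lemma isAltStep_succ_iff {t m : ℕ} (h : f m ≠ f (m + 1)) :
    IsAltStep f t m (m + 1) ↔ (f (m + 1) < f m ↔ Even t) := by
  unfold IsAltStep
  rcases h.lt_or_gt with h | h <;> split_ifs <;> simp_all [h.not_gt]

lemma IsAltStep.exists_adjacent {t a b : ℕ} (h : IsAltStep f t a b) :
    ∃ j, a < j ∧ j ≤ b ∧ IsAltStep f t (j - 1) j := by
  obtain ⟨hab, hdir⟩ := h
  induction b, hab using Nat.le_induction with
  | base => exact ⟨a + 1, by omega, le_rfl, by simpa [IsAltStep] using hdir⟩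
  | succ b hab ih =>
    by_cases hstep : IsAltStep f t b (b + 1)
    · exact ⟨b + 1, by omega, le_rfl, hstep⟩
    · obtain ⟨j, haj, hjb, hj⟩ := ih (by
        simp only [IsAltStep, Nat.lt_succ_self, true_and] at hstep
        split_ifs at * <;> order)
      exact ⟨j, haj, hjb.trans b.le_succ, hj⟩

lemma even_turnSum_iff_of_isAltStep {n : ℕ} (hf : ∀ j, 1 ≤ j → j < n → f j ≠ f (j + 1))
    {t j : ℕ} (hj : 2 ≤ j) (hjn : j ≤ n) (h : IsAltStep f t (j - 1) j) :
    Even (turnSum f j) ↔ Even t := by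
  rw [even_turnSum_iff hf (by omega) hjn, StepsDown]
  obtain ⟨-, h⟩ := h
  split_ifs at h with ht
  · simp [ht, h]
    omega
  · simp [ht, h.not_gt]

lemma succ_le_turnSum_getElem {n : ℕ} (hf : ∀ j, 1 ≤ j → j < n → f j ≠ f (j + 1))
    {l : List ℕ} (hl : IsAlternating f l) (hrange : ∀ i ∈ l, 1 ≤ i ∧ i ≤ n) :
    ∀ t (ht : t < l.length), t + 1 ≤ turnSum f l[t] := by
  intro t ht
  induction t with
  | zero => exact one_le_turnSum _
  | succ t ih =>
    obtain ⟨j, hj, hjle, hjstep⟩ := (hl t ht).exists_adjacent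
    have hpos := (hrange l[t] (List.getElem_mem _)).1
    have hle := (hrange l[t + 1] (List.getElem_mem _)).2
    have hparity := even_turnSum_iff_of_isAltStep hf (by omega) (hjle.trans hle) hjstep
    have hlt : t + 1 < turnSum f j := by
      refine lt_of_le_of_ne ((ih (by omega)).trans (turnSum_mono hj.le)) fun h => ?_
      rw [← h, Nat.even_add_one] at hparity
      tauto
    exact hlt.trans_le (turnSum_mono hjle)

lemma length_le_turnSum {n : ℕ} (hf : ∀ j, 1 ≤ j → j < n → f j ≠ f (j + 1))
    {l : List ℕ} (hl : IsAlternating f l) (hrange : ∀ i ∈ l, 1 ≤ i ∧ i ≤ n) :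
    l.length ≤ turnSum f n := by
  cases hk : l.length with
  | zero => exact Nat.zero_le _
  | succ k =>
    calc k + 1 ≤ turnSum f (l[k]'(by omega)) := succ_le_turnSum_getElem hf hl hrange k _
      _ ≤ turnSum f n := turnSum_mono (hrange _ (List.getElem_mem _)).2

lemma isAlternating_append_singleton_iff {l : List ℕ} {x : ℕ} :
    IsAlternating f (l ++ [x]) ↔
      IsAlternating f l ∧ ∀ y ∈ l.getLast?, IsAltStep f (l.length - 1) y x := by
  constructor
  · intro h
    refine ⟨fun t ht => ?_, fun y hy => ?_⟩
    · simpa [List.getElem_append_left, ht, Nat.lt_of_succ_lt ht] using h t (by simp; omega)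
    · rw [List.getLast?_eq_getElem?, Option.mem_def, List.getElem?_eq_some_iff] at hy
      obtain ⟨hy, rfl⟩ := hy
      have := h (l.length - 1) (by simp; omega)
      grind
  · rintro ⟨h, hlast⟩ t ht
    unfold IsAlternating at h
    grind

lemma exists_isAlternating_length_eq_turnSum {n : ℕ}
    (hf : ∀ j, 1 ≤ j → j < n → f j ≠ f (j + 1)) {m : ℕ} (hm : 1 ≤ m) (hmn : m ≤ n) :
    ∃ l, IsAlternating f (l ++ [m]) ∧ (∀ i ∈ l, 1 ≤ i ∧ i < m) ∧
      (l ++ [m]).length = turnSum f m := by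
  induction m, hm using Nat.le_induction with
  | base => exact ⟨[], by simp [IsAlternating], by simp, by simp [turnSum_one]⟩
  | succ m hm ih =>
    obtain ⟨l, hl, hrange, hlen⟩ := ih (by omega)
    rw [List.length_append, List.length_singleton] at hlen
    have hparity := even_turnSum_iff hf hm (by omega)
    have hnext (t : ℕ) := isAltStep_succ_iff (f := f) (t := t) (hf m hm (by omega))
    rw [turnSum_succ hm, turnAt_eq_ite hf hm (by omega)]
    split_ifs with hturn
    · refine ⟨l, ?_, fun i hi => ⟨(hrange i hi).1, by linarith [(hrange i hi).2]⟩, by simpa⟩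
      rw [isAlternating_append_singleton_iff] at hl ⊢
      refine ⟨hl.1, fun y hy => (hl.2 y hy).trans ((hnext _).2 ?_)⟩
      have hne : l ≠ [] := by rintro rfl; simp at hy
      have : l.length - 1 + 2 = turnSum f m := by
        have := List.length_pos_iff.2 hne
        omega
      rw [← hturn, ← hparity, ← this, Nat.even_add]
      simp
    · refine ⟨l ++ [m], ?_, ?_, by simpa⟩
      · rw [isAlternating_append_singleton_iff]
        refine ⟨hl, ?_⟩
        simp only [List.getLast?_concat, Option.mem_def, Option.some.injEq, forall_eq',
          List.length_append, List.length_singleton, Nat.add_sub_cancel, hnext]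
        rw [← hlen, Nat.even_add_one] at hparity
        tauto
      · intro i hi
        rcases List.mem_append.1 hi with hi | hi
        · exact ⟨(hrange i hi).1, by linarith [(hrange i hi).2]⟩
        · simp only [List.mem_singleton] at hi
          omega

theorem isGreatest_length_isAlternating {n : ℕ} (hf : ∀ j, 1 ≤ j → j < n → f j ≠ f (j + 1))
    (hn : 1 ≤ n) :
    IsGreatest {k | ∃ l, IsAlternating f l ∧ (∀ i ∈ l, 1 ≤ i ∧ i ≤ n) ∧ l.length = k}
      (turnSum f n) := by
  refine ⟨?_, ?_⟩
  · obtain ⟨l, hl, hrange, hlen⟩ := exists_isAlternating_length_eq_turnSum hf hn le_rfl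
    refine ⟨l ++ [n], hl, fun i hi => ?_, hlen⟩
    rcases List.mem_append.1 hi with hi | hi
    · exact ⟨(hrange i hi).1, (hrange i hi).2.le⟩
    · simp only [List.mem_singleton] at hi
      omega
  · rintro k ⟨l, hl, hrange, rfl⟩
    exact length_le_turnSum hf hl hrange

end Alternating

section Permutation

variable {n : ℕ} (σ : Equiv.Perm (Fin n))

lemma ap_val_add_one (i : Fin n) : ap σ (i + 1) = σ i + 1 := by
  simp [ap]

lemma ap_ne_ap_add_one (j : ℕ) (hj : 1 ≤ j) (hjn : j < n) : ap σ j ≠ ap σ (j + 1) := by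
  obtain ⟨i, rfl⟩ := Nat.exists_eq_add_of_le' hj
  rw [ap_val_add_one σ ⟨i, by omega⟩, ap_val_add_one σ ⟨i + 1, hjn⟩, Ne, add_left_inj,
    Fin.val_inj, σ.apply_eq_iff_eq, Fin.ext_iff]
  simp

lemma isAlternating_ap_map_iff (L : List (Fin n)) :
    IsAlternating (ap σ) (L.map fun i => i.val + 1) ↔ L.IsChain (· < ·) ∧
      ∀ t : ℕ, ∀ ht : t + 1 < L.length,
        if Even t then σ (L[t+1]'ht) < σ (L[t]'(Nat.lt_of_succ_lt ht))
        else σ (L[t]'(Nat.lt_of_succ_lt ht)) < σ (L[t+1]'ht) := by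
  simp only [IsAlternating, IsAltStep, List.isChain_iff_getElem, List.length_map,
    List.getElem_map, ap_val_add_one, ← forall_and, add_lt_add_iff_right, Fin.val_fin_lt]

lemma las_eq_sSup_isAlternating_ap : LAS σ =
    sSup {k | ∃ l, IsAlternating (ap σ) l ∧ (∀ i ∈ l, 1 ≤ i ∧ i ≤ n) ∧ l.length = k} := by
  unfold LAS
  congr 1
  ext k
  constructor
  · rintro ⟨L, hchain, halt, rfl⟩
    refine ⟨L.map fun i => i.val + 1, (isAlternating_ap_map_iff σ L).2 ⟨hchain, halt⟩, ?_,
      L.length_map _⟩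
    simp only [List.mem_map]
    rintro _ ⟨i, -, rfl⟩
    omega
  · rintro ⟨l, hl, hrange, rfl⟩
    set L := l.pmap (fun i hi => (⟨i - 1, by omega⟩ : Fin n)) hrange
    have hL : L.map (fun i => i.val + 1) = l := by
      rw [List.map_pmap, List.pmap_eq_self]
      intro i hi
      have := (hrange i hi).1
      simp only
      omega
    rw [← hL] at hl
    obtain ⟨hchain, halt⟩ := (isAlternating_ap_map_iff σ L).1 hl
    exact ⟨L, hchain, halt, by rw [← hL, List.length_map]⟩

end Permutation

/-- `LAS(σ) = 1 + ∑_{k=1}^{n-1} M_k(σ)`. -/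
theorem las_eq_one_add_sum {n : ℕ} (hn : 2 ≤ n) (σ : Equiv.Perm (Fin n)) :
    LAS σ = 1 + ∑ k ∈ Finset.Icc 1 (n - 1), Mstat σ k := by
  rw [las_eq_sSup_isAlternating_ap]
  exact (isGreatest_length_isAlternating (ap_ne_ap_add_one σ) (by omega)).csSup_eq
end

section
/- For any permutation σ ∈ S_n and any transposition (i,j), the length of the longest alternating subsequence satisfies |LAS(σ) − LAS(σ∘(i,j))| ≤ 6. -/
/-!
Deleting an entry `x` from an alternating sequence, together with at most one neighbour of `x`,
leaves an alternating sequence: if `a, x, y` are consecutive, then according to how `a` and `y`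
compare, dropping `a` or dropping `y` restores the alternation. Hence an alternating subsequence
of `σ`, once it has lost at most two entries for each position where `σ` and `τ` differ, is an
alternating subsequence of `τ`. Since `σ` and `σ * swap i j` differ at most at `i` and `j`, the
two LAS differ by at most `4`.
-/

open Finset
open scoped Classical

instance IsOrderConnected.swap {α : Type*} (r : α → α → Prop) [IsOrderConnected α r] :
    IsOrderConnected α (Function.swap r) :=
  ⟨fun a b c h => (IsOrderConnected.conn c b a h).symm⟩

namespace List

variable {α : Type*}

def Alternating : (α → α → Prop) → List α → Prop
  | _, [] => True
  | _, [_] => True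
  | r, x :: y :: l => r x y ∧ Alternating (Function.swap r) (y :: l)

variable {r : α → α → Prop} {a x y : α} {l : List α}

@[simp] theorem alternating_nil : Alternating r [] := trivial

@[simp] theorem alternating_singleton : Alternating r [x] := trivial

@[simp] theorem alternating_cons_cons :
    Alternating r (x :: y :: l) ↔ r x y ∧ Alternating (Function.swap r) (y :: l) := Iff.rfl

theorem Alternating.tail (h : Alternating r l) : Alternating (Function.swap r) l.tail := by
  match l, h with
  | [], _ | [_], _ => trivial
  | _ :: _ :: _, h => exact h.2

theorem Alternating.cons_of_forall_rel (h : Alternating r (y :: l)) (hya : ∀ z, r y z → r a z) :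
    Alternating r (a :: l) := by
  match l, h with
  | [], _ => trivial
  | _ :: _, h => exact ⟨hya _ h.1, h.2⟩

theorem alternating_iff_getElem :
    Alternating r l ↔ ∀ (t : ℕ) (ht : t + 1 < l.length),
      if Even t then r l[t] l[t + 1] else r l[t + 1] l[t] := by
  induction l generalizing r with
  | nil => simp
  | cons x l ih =>
    match l with
    | [] => simp
    | y :: l =>
      rw [alternating_cons_cons, ih]
      constructor
      · rintro ⟨hxy, h⟩ (_ | t) ht
        · simpa using hxy
        · have := h t (by simpa using ht)
          simpa only [Nat.even_add_one, ite_not, getElem_cons_succ, Function.swap] using this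
      · intro h
        refine ⟨by simpa using h 0 (by simp), fun t ht => ?_⟩
        have := h (t + 1) (by simpa using ht)
        simpa only [Nat.even_add_one, ite_not, getElem_cons_succ, Function.swap] using this

theorem alternating_map {β : Type*} {f : β → α} {l : List β} :
    Alternating r (l.map f) ↔ Alternating (f ⁻¹'o r) l := by
  induction l generalizing r with
  | nil => simp
  | cons x l ih =>
    match l with
    | [] => simp
    | y :: l => exact and_congr Iff.rfl (ih (r := Function.swap r))

/-- The last clause, that whatever may precede `w₁` may also precede `u`, is the invariant that
lets the induction prepend the head of `w₁` again. -/
theorem Alternating.exists_sublist_of_append_cons [IsTrans α r] [IsOrderConnected α r]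
    {w₁ w₂ : List α} (h : Alternating r (w₁ ++ x :: w₂)) :
    ∃ u, u <+ w₁ ++ w₂ ∧ w₁.length + w₂.length ≤ u.length + 1 ∧ Alternating r u ∧
      ∀ a, w₁ ≠ [] → Alternating (Function.swap r) (a :: (w₁ ++ x :: w₂)) →
        Alternating (Function.swap r) (a :: u) := by
  induction w₁ generalizing r with
  | nil =>
    exact ⟨w₂.tail, by simpa using tail_sublist w₂, by simp; omega, h.tail.tail, by simp⟩
  | cons b v ih =>
    match v, w₂, h with
    | [], [], _ =>
      exact ⟨[b], by simp, by simp, by simp, fun a _ ha => ⟨ha.1, trivial⟩⟩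
    | [], y :: l, h =>
      obtain ⟨-, -, hyl⟩ := h
      by_cases hby : Function.swap r b y
      · exact ⟨y :: l, by simp, by simp; omega, hyl, fun a _ ha => ⟨_root_.trans ha.1 hby, hyl⟩⟩
      · have hbl : Alternating r (b :: l) := hyl.cons_of_forall_rel fun z hyz =>
          (IsOrderConnected.conn y b z hyz).resolve_left hby
        exact ⟨b :: l, by simp, by simp; omega, hbl, fun a _ ha => ⟨ha.1, hbl⟩⟩
    | c :: v, w₂, h =>
      obtain ⟨u, hu, hlen, -, hpre⟩ := ih h.2
      have hbu : Alternating r (b :: u) := hpre b (cons_ne_nil c v) h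
      exact ⟨b :: u, hu.cons_cons b, by simp at hlen ⊢; omega, hbu, fun a _ ha => ⟨ha.1, hbu⟩⟩

theorem Alternating.exists_sublist_erase [DecidableEq α] [IsTrans α r] [IsOrderConnected α r]
    (h : Alternating r l) (x : α) :
    ∃ u, u <+ l.erase x ∧ Alternating r u ∧ l.length ≤ u.length + 2 := by
  by_cases hx : x ∈ l
  · obtain ⟨w₁, w₂, -, rfl, herase⟩ := exists_erase_eq hx
    obtain ⟨u, hu, hlen, hu', -⟩ := h.exists_sublist_of_append_cons
    exact ⟨u, herase ▸ hu, hu', by simp; omega⟩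
  · exact ⟨l, by rw [erase_of_not_mem hx], h, by omega⟩

theorem Alternating.exists_sublist_forall_not_mem [DecidableEq α] [IsTrans α r]
    [IsOrderConnected α r] (h : Alternating r l) (hl : l.Nodup) (s : Finset α) :
    ∃ u, u <+ l ∧ (∀ x ∈ u, x ∉ s) ∧ Alternating r u ∧ l.length ≤ u.length + 2 * s.card := by
  induction s using Finset.induction_on with
  | empty => exact ⟨l, Sublist.refl l, by simp, h, by simp⟩
  | insert a s ha ih =>
    obtain ⟨u, hu, hus, hu', hlen⟩ := ih
    obtain ⟨v, hv, hv', hvlen⟩ := hu'.exists_sublist_erase a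
    refine ⟨v, hv.trans (erase_sublist.trans hu), fun x hx => ?_, hv', ?_⟩
    · have hxu := hv.subset hx
      rw [Finset.mem_insert, not_or]
      exact ⟨fun hxa => (hl.sublist hu).not_mem_erase (hxa ▸ hxu), hus x (erase_subset hxu)⟩
    · rw [Finset.card_insert_of_notMem ha]
      omega

end List

section LAS

variable {n : ℕ}

theorem LAS_eq_sSup (σ : Equiv.Perm (Fin n)) : LAS σ = sSup {k | ∃ l : List (Fin n),
    l.IsChain (· < ·) ∧ List.Alternating (σ ⁻¹'o (· > ·)) l ∧ l.length = k} := by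
  simp only [List.alternating_iff_getElem]
  rfl

theorem bddAbove_setOf_length_isChain_lt (P : List (Fin n) → Prop) :
    BddAbove {k | ∃ l : List (Fin n), l.IsChain (· < ·) ∧ P l ∧ l.length = k} := by
  refine ⟨n, ?_⟩
  rintro _ ⟨l, hl, -, rfl⟩
  simpa using (List.isChain_iff_pairwise.mp hl).nodup.length_le_card

theorem length_le_LAS {σ : Equiv.Perm (Fin n)} {l : List (Fin n)} (hl : l.IsChain (· < ·))
    (h : List.Alternating (σ ⁻¹'o (· > ·)) l) : l.length ≤ LAS σ :=
  LAS_eq_sSup σ ▸ le_csSup (bddAbove_setOf_length_isChain_lt _) ⟨l, hl, h, rfl⟩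

theorem exists_length_eq_LAS (σ : Equiv.Perm (Fin n)) :
    ∃ l : List (Fin n), l.IsChain (· < ·) ∧ List.Alternating (σ ⁻¹'o (· > ·)) l ∧
      l.length = LAS σ := by
  rw [LAS_eq_sSup]
  refine Nat.sSup_mem ?_ (bddAbove_setOf_length_isChain_lt _)
  exact ⟨0, [], List.isChain_nil, trivial, rfl⟩

theorem LAS_le_LAS_add_two_mul_card (σ τ : Equiv.Perm (Fin n)) :
    LAS σ ≤ LAS τ + 2 * #{x | σ x ≠ τ x} := by
  obtain ⟨l, hl, h, hlσ⟩ := exists_length_eq_LAS σ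
  obtain ⟨u, hu, hus, hu', hlen⟩ :=
    h.exists_sublist_forall_not_mem (List.isChain_iff_pairwise.mp hl).nodup {x | σ x ≠ τ x}
  have hτ : List.Alternating (τ ⁻¹'o (· > ·)) u := by
    have hστ : u.map σ = u.map τ := List.map_congr_left fun x hx => by simpa using hus x hx
    rw [← List.alternating_map] at hu' ⊢
    rwa [← hστ]
  rw [← hlσ]
  exact hlen.trans (Nat.add_le_add_right (length_le_LAS (hl.sublist hu) hτ) _)

theorem card_filter_ne_mul_swap_le_two (σ : Equiv.Perm (Fin n)) (i j : Fin n) :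
    #{x | σ x ≠ (σ * Equiv.swap i j) x} ≤ 2 := by
  refine (card_le_card fun x hx => ?_).trans (card_le_two (a := i) (b := j))
  rw [mem_filter, Equiv.Perm.mul_apply] at hx
  by_contra hxij
  rw [mem_insert, mem_singleton, not_or] at hxij
  exact hx.2 (by rw [Equiv.swap_apply_of_ne_of_ne hxij.1 hxij.2])

end LAS

theorem las_mul_swap_diff_le_six_general {n : ℕ} (σ : Equiv.Perm (Fin n)) (i j : Fin n) :
    |(LAS σ : ℤ) - (LAS (σ * Equiv.swap i j) : ℤ)| ≤ 6 := by
  have hσ := LAS_le_LAS_add_two_mul_card σ (σ * Equiv.swap i j)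
  have hτ := LAS_le_LAS_add_two_mul_card (σ * Equiv.swap i j) σ
  have hcard := card_filter_ne_mul_swap_le_two σ i j
  simp only [ne_comm (a := (σ * Equiv.swap i j) _)] at hτ
  rw [abs_le]
  omega

/-- Right-composition with a transposition changes the LAS by at most 6. -/
theorem las_mul_swap_diff_le_six {n : ℕ} (σ : Equiv.Perm (Fin n)) (i j : Fin n)
    (hij : i ≠ j) :
    |(LAS σ : ℤ) - (LAS (σ * Equiv.swap i j) : ℤ)| ≤ 6 :=
  las_mul_swap_diff_le_six_general σ i j
end

section
/- Let f be a function on S_n given by f(σ) = Σ_{1≤i_1<...<i_k≤n} g(i_1,...,i_k, σ(i_1), σ(i_1−1),..., σ(i_1−m+1), ..., σ(i_k),...,σ(i_k−m+1)) for some Boolean function g (with the convention σ(i)=0 for i ≤ 0). Then for any σ ∈ S_n and any transposition (i,j), |f(σ∘(i,j)) − f(σ)| ≤ 2km·n^{k−1}. -/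
open Finset
open scoped Classical

/-- The local statistic of type `k` (window size `m`) associated to a Boolean
function `g`:
`f(σ) = ∑_{1 ≤ i₁ < ⋯ < i_k ≤ n} g(i₁,…,i_k, σ(i₁),…,σ(i₁-m+1),…,σ(i_k),…,σ(i_k-m+1))`
with the convention `σ(i) = 0` for `i ≤ 0`. -/
noncomputable def localStat {n : ℕ} (k m : ℕ)
    (g : (Fin k → ℕ) → (Fin k → Fin m → ℕ) → ℕ) (σ : Equiv.Perm (Fin n)) : ℕ :=
  ∑ t ∈ (Finset.univ : Finset (Fin k → Fin n)).filter StrictMono,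
    g (fun r => (t r : ℕ) + 1) (fun r s => ap σ ((t r : ℕ) + 1 - (s : ℕ)))

/-!
Since `σ * swap i j` and `σ` agree away from the positions `i` and `j`, the summand of an
increasing tuple can only change when one of its windows `{iᵣ - m + 1, …, iᵣ}` meets `{i, j}`.
For each of `i`, `j` there are `k * m` ways to choose the slot `r` and the offset inside the
window, and each choice pins `iᵣ`, leaving at most `n ^ (k - 1)` tuples. As `g` is Boolean, every
changed summand moves the sum by at most one.
-/

lemma ap_mul_swap_of_ne {n : ℕ} (σ : Equiv.Perm (Fin n)) (i j : Fin n) {p : ℕ}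
    (hi : p ≠ (i : ℕ) + 1) (hj : p ≠ (j : ℕ) + 1) :
    ap (σ * Equiv.swap i j) p = ap σ p := by
  unfold ap
  split_ifs with hp
  · rw [Equiv.Perm.mul_apply, Equiv.swap_apply_of_ne_of_ne] <;>
      exact Fin.ne_of_val_ne (by simp only; omega)
  · rfl

lemma card_filter_apply_eq_le {ι α β : Type*} [Fintype ι] [DecidableEq ι] [Fintype α]
    [DecidableEq β] {f : α → β} (hf : Function.Injective f) (r : ι) (b : β) :
    #{t : ι → α | f (t r) = b} ≤ Fintype.card α ^ (Fintype.card ι - 1) := by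
  by_cases hb : ∃ x, f x = b
  · obtain ⟨x, rfl⟩ := hb
    simpa [hf.eq_iff] using
      (Fintype.card_filter_piFinset_const_eq_of_mem univ r (mem_univ x)).le
  · simp [not_exists.mp hb]

lemma card_filter_exists_window_hits_le {n k m : ℕ} (a : ℕ) :
    #{t : Fin k → Fin n | ∃ r : Fin k, ∃ s : Fin m, (t r : ℕ) = a + s}
      ≤ k * m * n ^ (k - 1) := by
  calc #{t : Fin k → Fin n | ∃ r : Fin k, ∃ s : Fin m, (t r : ℕ) = a + s}
      ≤ #((univ : Finset (Fin k × Fin m)).biUnion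
          fun rs => {t : Fin k → Fin n | (t rs.1 : ℕ) = a + rs.2}) :=
        card_le_card fun t ht => by simpa using ht
    _ ≤ ∑ rs : Fin k × Fin m, #{t : Fin k → Fin n | (t rs.1 : ℕ) = a + rs.2} :=
        card_biUnion_le
    _ ≤ ∑ _rs : Fin k × Fin m, n ^ (k - 1) :=
        sum_le_sum fun rs _ => by
          simpa using card_filter_apply_eq_le Fin.val_injective rs.1 (a + rs.2)
    _ = k * m * n ^ (k - 1) := by simp

lemma abs_sum_sub_sum_le_card_filter_ne {ι : Type*} (s : Finset ι) {f g : ι → ℤ}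
    (hfg : ∀ t ∈ s, |f t - g t| ≤ 1) :
    |∑ t ∈ s, f t - ∑ t ∈ s, g t| ≤ #{t ∈ s | f t ≠ g t} := by
  rw [← sum_sub_distrib, ← sum_filter_ne_zero]
  simp only [sub_ne_zero]
  calc |∑ t ∈ s with f t ≠ g t, (f t - g t)|
      ≤ ∑ t ∈ s with f t ≠ g t, |f t - g t| := abs_sum_le_sum_abs _ _
    _ ≤ ∑ t ∈ s with f t ≠ g t, 1 := sum_le_sum fun t ht => hfg t (mem_filter.mp ht).1
    _ = #{t ∈ s | f t ≠ g t} := by simp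

theorem localStat_mul_swap_diff_le_general {n k m : ℕ}
    (g : (Fin k → ℕ) → (Fin k → Fin m → ℕ) → ℕ) (hg : ∀ a b, g a b ≤ 1)
    (σ : Equiv.Perm (Fin n)) (i j : Fin n) :
    |(localStat k m g (σ * Equiv.swap i j) : ℤ) - (localStat k m g σ : ℤ)|
      ≤ 2 * k * m * n ^ (k - 1) := by
  set term := fun (τ : Equiv.Perm (Fin n)) (t : Fin k → Fin n) =>
    (g (fun r => (t r : ℕ) + 1) (fun r s => ap τ ((t r : ℕ) + 1 - (s : ℕ))) : ℤ)
  -- `ap` is 1-indexed, so the position `t r + 1 - s` equals `i + 1` exactly when `t r = i + s`.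
  set hits := fun (a : ℕ) (t : Fin k → Fin n) => ∃ r : Fin k, ∃ s : Fin m, (t r : ℕ) = a + s
  have localStat_eq_sum : ∀ τ, (localStat k m g τ : ℤ) = ∑ t ∈ univ.filter StrictMono, term τ t :=
    fun τ => by push_cast [localStat]; rfl
  have term_bounds : ∀ τ t, 0 ≤ term τ t ∧ term τ t ≤ 1 :=
    fun τ t => ⟨by positivity, Nat.cast_le_one.mpr (hg _ _)⟩
  have term_ne_imp_hits : ∀ t, term (σ * Equiv.swap i j) t ≠ term σ t → hits i t ∨ hits j t := by
    intro t hne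
    by_contra! hfar
    refine hne (congrArg _ (congrArg _ (funext₂ fun r s => ap_mul_swap_of_ne σ i j ?_ ?_)))
    · exact fun h => hfar.1 ⟨r, s, by omega⟩
    · exact fun h => hfar.2 ⟨r, s, by omega⟩
  calc |(localStat k m g (σ * Equiv.swap i j) : ℤ) - (localStat k m g σ : ℤ)|
      ≤ #{t ∈ univ.filter StrictMono | term (σ * Equiv.swap i j) t ≠ term σ t} := by
        rw [localStat_eq_sum, localStat_eq_sum]
        refine abs_sum_sub_sum_le_card_filter_ne _ fun t _ => abs_sub_le_iff.mpr ⟨?_, ?_⟩ <;>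
          linarith [term_bounds (σ * Equiv.swap i j) t, term_bounds σ t]
    _ ≤ #{t | hits i t} + #{t | hits j t} := by
        norm_cast
        refine (card_le_card fun t ht => ?_).trans (card_union_le _ _)
        simpa using term_ne_imp_hits t (mem_filter.mp ht).2
    _ ≤ 2 * k * m * n ^ (k - 1) := by
        have hi : #{t | hits i t} ≤ k * m * n ^ (k - 1) := card_filter_exists_window_hits_le i
        have hj : #{t | hits j t} ≤ k * m * n ^ (k - 1) := card_filter_exists_window_hits_le j
        norm_cast
        linarith

/-- For a local statistic `f` of type `k` with window size `m` given by a Boolean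
function `g`, right-composition with a transposition changes `f` by at most
`2·k·m·n^(k-1)`. -/
theorem localStat_mul_swap_diff_le {n k m : ℕ} (hk : 1 ≤ k) (hm : 1 ≤ m)
    (hn : k + m - 1 ≤ n)
    (g : (Fin k → ℕ) → (Fin k → Fin m → ℕ) → ℕ) (hg : ∀ a b, g a b ≤ 1)
    (σ : Equiv.Perm (Fin n)) (i j : Fin n) (hij : i ≠ j) :
    |(localStat k m g (σ * Equiv.swap i j) : ℤ) - (localStat k m g σ : ℤ)|
      ≤ 2 * k * m * n ^ (k - 1) :=
  localStat_mul_swap_diff_le_general g hg σ i j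
end

section
/- Under the Ewens distribution with parameter θ ≥ 0 on S_n, the expected number of cycles equals 1 + Σ_{i=2}^{n} θ/(i−1+θ), and in particular is at most 2 + θ·log(n). -/
open Finset
open scoped Classical

/-- The number of cycles of a permutation of `Fin n`, counting fixed points as
(singleton) cycles. -/
noncomputable def numCycles {n : ℕ} (σ : Equiv.Perm (Fin n)) : ℕ :=
  σ.cycleType.card + (Finset.univ.filter fun x => σ x = x).card

/-- The Ewens(θ) probability of a permutation `σ ∈ S_n`:
`θ^(#(σ)-1) / ∏_{i=1}^{n-1} (θ + i)`. -/
noncomputable def ewensWeight (n : ℕ) (θ : ℝ) (σ : Equiv.Perm (Fin n)) : ℝ :=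
  θ ^ (numCycles σ - 1) / ∏ i ∈ Finset.range (n - 1), (θ + (i + 1 : ℕ))

/-!
Sort `σ ∈ S_{n+1}` by the image of `0` (`Equiv.Perm.decomposeFin`). If `σ 0 = 0`, then `0` is a
new fixed point of a permutation of the other `n` points; otherwise `σ` is obtained from such a
permutation by splicing `0` into one of its cycles, which leaves the number of cycles unchanged.
Hence `∑_{S_{n+1}} f(#σ) = ∑_{S_n} f(#σ + 1) + n ∑_{S_n} f(#σ)` for every `f`. With
`f(k) = θ^(k-1)` this gives the normalising constant `∏_{i=1}^{n} (θ + i)`, and with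
`f(k) = k θ^(k-1)` the recursion `E_{n+1} = E_n + θ / (θ + n)` for the mean `E_n`. The logarithmic
bound is `H_n ≤ 1 + log n`, once the first term `θ / (θ + 1)` is bounded by `1`.
-/

namespace Equiv.Perm

variable {α : Type*} [Fintype α] [DecidableEq α]

theorem IsCycle.card_cycleType_swap_mul_add {c : Perm α} (hc : c.IsCycle) {x : α}
    (hx : c x ≠ x) :
    (swap x (c x) * c).cycleType.card + #c.support =
      c.cycleType.card + #(swap x (c x) * c).support + 1 := by
  rw [hc.cycleType, Multiset.card_singleton]
  by_cases hcc : c (c x) = x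
  · have hswap : c = swap x (c x) := hc.eq_swap_of_apply_apply_eq_self hx hcc
    rw [← hswap, hswap, swap_mul_self, cycleType_one, support_one, card_support_swap hx.symm]
    rfl
  · rw [(hc.swap_mul hx hcc).cycleType, support_swap_mul_eq c x hcc,
      card_sdiff_of_subset (singleton_subset_iff.2 (mem_support.2 hx))]
    have := card_pos.2 ⟨x, mem_support.2 hx⟩
    simp only [Multiset.card_singleton, card_singleton]
    omega

theorem card_cycleType_swap_mul_add {f : Perm α} {x : α} (hx : f x ≠ x) :
    (swap x (f x) * f).cycleType.card + #f.support =
      f.cycleType.card + #(swap x (f x) * f).support + 1 := by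
  -- `f = c * r` with `c` the cycle through `x`; the transposition only acts on `c`.
  set c := f.cycleOf x
  set r := f * c⁻¹
  have hrc : r.Disjoint c := disjoint_mul_inv_of_mem_cycleFactorsFinset
    (cycleOf_mem_cycleFactorsFinset_iff.2 (mem_support.2 hx))
  have hf : f = c * r := by rw [← hrc.commute.eq, inv_mul_cancel_right]
  have hcx : c x = f x := cycleOf_apply_self f x
  have hcx_ne : c x ≠ x := hcx ▸ hx
  have hsr : (swap x (c x) * c).Disjoint r :=
    hrc.symm.mono (fun y hy => (mem_support_swap_mul_imp_mem_support_ne hy).1) le_rfl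
  have hsf : swap x (f x) * f = swap x (c x) * c * r := by rw [hcx, hf, mul_assoc]
  rw [hsf, hsr.cycleType_mul, hsr.card_support_mul, hf, hrc.symm.cycleType_mul,
    hrc.symm.card_support_mul, Multiset.card_add, Multiset.card_add]
  have hc : c.IsCycle := isCycle_cycleOf f hx
  have := hc.card_cycleType_swap_mul_add hcx_ne
  omega

theorem card_parts_partition (σ : Perm α) :
    σ.partition.parts.card = σ.cycleType.card + (Fintype.card α - #σ.support) := by
  rw [parts_partition, Multiset.card_add, Multiset.card_replicate]

theorem card_parts_partition_swap_mul {f : Perm α} {x : α} (hx : f x ≠ x) :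
    (swap x (f x) * f).partition.parts.card = f.partition.parts.card + 1 := by
  have := card_cycleType_swap_mul_add hx
  have := (swap x (f x) * f).support.card_le_univ
  have := f.support.card_le_univ
  rw [card_parts_partition, card_parts_partition]
  omega

theorem decomposeFin_symm_eq_swap_mul {n : ℕ} (p : Fin (n + 1)) (e : Perm (Fin n)) :
    decomposeFin.symm (p, e) = swap 0 p * decomposeFin.symm (0, e) := by
  ext x
  refine Fin.cases ?_ (fun y => ?_) x <;> simp [decomposeFin_symm_apply_succ]

theorem decomposeFin_symm_zero {n : ℕ} (e : Perm (Fin n)) :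
    decomposeFin.symm (0, e) = e.extendDomain (finSuccAboveEquiv 0) := by
  ext x
  refine Fin.cases ?_ (fun y => ?_) x
  · simp [extendDomain_apply_not_subtype]
  · have hy : (finSuccAboveEquiv 0).symm ⟨y.succ, y.succ_ne_zero⟩ = y := by
      rw [Equiv.symm_apply_eq]; ext; simp [finSuccAboveEquiv_apply]
    simp [decomposeFin_symm_apply_succ, extendDomain_apply_subtype, finSuccAboveEquiv_apply, hy]

end Equiv.Perm

open Equiv Perm

theorem numCycles_eq_card_parts_partition {n : ℕ} (σ : Perm (Fin n)) :
    numCycles σ = σ.partition.parts.card := by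
  have hfix : (univ.filter fun x => σ x = x) = σ.supportᶜ := by ext; simp
  rw [numCycles, card_parts_partition, hfix, card_compl]

theorem one_le_numCycles {n : ℕ} (σ : Perm (Fin (n + 1))) : 1 ≤ numCycles σ := by
  rw [numCycles_eq_card_parts_partition, Nat.one_le_iff_ne_zero, Ne, Multiset.card_eq_zero]
  intro h
  have := σ.partition.parts_sum
  rw [h, Multiset.sum_zero, Fintype.card_fin] at this
  exact n.succ_ne_zero this.symm

theorem numCycles_decomposeFin_symm_zero {n : ℕ} (e : Perm (Fin n)) :
    numCycles (decomposeFin.symm (0, e)) = numCycles e + 1 := by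
  have := e.support.card_le_univ
  rw [numCycles_eq_card_parts_partition, numCycles_eq_card_parts_partition, card_parts_partition,
    card_parts_partition, decomposeFin_symm_zero, cycleType_extendDomain,
    card_support_extend_domain]
  simp only [Fintype.card_fin] at this ⊢
  omega

theorem numCycles_decomposeFin_symm_of_ne_zero {n : ℕ} {p : Fin (n + 1)} (hp : p ≠ 0)
    (e : Perm (Fin n)) : numCycles (decomposeFin.symm (p, e)) = numCycles e := by
  have hτ : decomposeFin.symm (p, e) 0 ≠ 0 := by rwa [decomposeFin_symm_apply_zero]
  have := card_parts_partition_swap_mul hτ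
  rw [decomposeFin_symm_apply_zero, decomposeFin_symm_eq_swap_mul p, ← mul_assoc, swap_mul_self,
    one_mul, ← decomposeFin_symm_eq_swap_mul, ← numCycles_eq_card_parts_partition,
    ← numCycles_eq_card_parts_partition, numCycles_decomposeFin_symm_zero] at this
  omega

theorem sum_perm_fin_succ {M : Type*} [AddCommMonoid M] (n : ℕ) (f : ℕ → M) :
    ∑ σ : Perm (Fin (n + 1)), f (numCycles σ) =
      ∑ σ : Perm (Fin n), f (numCycles σ + 1) + n • ∑ σ : Perm (Fin n), f (numCycles σ) := by
  rw [← decomposeFin.symm.sum_comp, Fintype.sum_prod_type, Fin.sum_univ_succ]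
  simp only [numCycles_decomposeFin_symm_zero,
    numCycles_decomposeFin_symm_of_ne_zero (Fin.succ_ne_zero _), sum_const, card_univ,
    Fintype.card_fin]

section CommSemiring

variable {R : Type*} [CommSemiring R] (θ : R)

theorem pow_numCycles_eq_mul {n : ℕ} (σ : Perm (Fin (n + 1))) :
    θ ^ numCycles σ = θ * θ ^ (numCycles σ - 1) := by
  rw [← pow_succ', Nat.sub_add_cancel (one_le_numCycles σ)]

theorem sum_pow_numCycles_sub_one (n : ℕ) :
    ∑ σ : Perm (Fin (n + 1)), θ ^ (numCycles σ - 1) = ∏ i ∈ range n, (θ + (i + 1 : ℕ)) := by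
  induction n with
  | zero => simp [numCycles_eq_card_parts_partition, card_parts_partition]
  | succ n ih =>
    simp only [sum_perm_fin_succ (n + 1) fun k => θ ^ (k - 1), Nat.add_sub_cancel,
      pow_numCycles_eq_mul θ, ← mul_sum, ih, prod_range_succ, nsmul_eq_mul]
    ring

theorem sum_numCycles_mul_pow_numCycles_sub_one_succ (n : ℕ) :
    ∑ σ : Perm (Fin (n + 2)), (numCycles σ : R) * θ ^ (numCycles σ - 1) =
      (θ + (n + 1 : ℕ)) * ∑ σ : Perm (Fin (n + 1)), (numCycles σ : R) * θ ^ (numCycles σ - 1) +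
        θ * ∑ σ : Perm (Fin (n + 1)), θ ^ (numCycles σ - 1) := by
  simp only [sum_perm_fin_succ (n + 1) fun k => (k : R) * θ ^ (k - 1), Nat.add_sub_cancel,
    pow_numCycles_eq_mul θ, Nat.cast_succ, nsmul_eq_mul, mul_sum, ← sum_add_distrib]
  exact sum_congr rfl fun σ _ => by ring

end CommSemiring

theorem sum_numCycles_mul_pow_numCycles_sub_one {θ : ℝ} (hθ : 0 ≤ θ) (n : ℕ) :
    ∑ σ : Perm (Fin (n + 1)), (numCycles σ : ℝ) * θ ^ (numCycles σ - 1) =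
      (∏ i ∈ range n, (θ + (i + 1 : ℕ))) * (1 + ∑ i ∈ range n, θ / (θ + (i + 1 : ℕ))) := by
  induction n with
  | zero => simp [numCycles_eq_card_parts_partition, card_parts_partition]
  | succ n ih =>
    have hpos : θ + (n + 1 : ℕ) ≠ 0 := by positivity
    rw [sum_numCycles_mul_pow_numCycles_sub_one_succ, ih, sum_pow_numCycles_sub_one,
      prod_range_succ, sum_range_succ]
    field_simp
    ring

theorem sum_div_add_le_one_add_mul_log {θ : ℝ} (hθ : 0 ≤ θ) (n : ℕ) :
    ∑ i ∈ range n, θ / (θ + (i + 1 : ℕ)) ≤ 1 + θ * Real.log n := by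
  rcases n with _ | m
  · simp
  have harmonic_tail : ∑ i ∈ range m, ((i + 1 + 1 : ℕ) : ℝ)⁻¹ ≤ Real.log (m + 1 : ℕ) := by
    have := harmonic_le_one_add_log (m + 1)
    simp only [harmonic, sum_range_succ', Rat.cast_add, Rat.cast_sum] at this
    push_cast at this ⊢
    linarith
  have hterm (i : ℕ) : θ / (θ + (i + 1 + 1 : ℕ)) ≤ θ * ((i + 1 + 1 : ℕ) : ℝ)⁻¹ := by
    rw [div_eq_mul_inv]
    gcongr
    exact le_add_of_nonneg_left hθ
  have hfirst : θ / (θ + (0 + 1 : ℕ)) ≤ 1 := div_le_one_of_le₀ (by simp) (by positivity)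
  rw [sum_range_succ']
  calc _ ≤ θ * ∑ i ∈ range m, ((i + 1 + 1 : ℕ) : ℝ)⁻¹ + 1 := by
        rw [mul_sum]; gcongr with i; exact hterm i
    _ ≤ 1 + θ * Real.log (m + 1 : ℕ) := by
        linarith [mul_le_mul_of_nonneg_left harmonic_tail hθ]

theorem sum_Icc_two_div_sub_one_add (θ : ℝ) (m : ℕ) :
    ∑ i ∈ Icc 2 (m + 1), θ / ((i : ℝ) - 1 + θ) = ∑ i ∈ range m, θ / (θ + (i + 1 : ℕ)) := by
  induction m with
  | zero => simp
  | succ m ih =>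
    rw [sum_Icc_succ_top (by omega), ih, sum_range_succ]
    push_cast
    ring_nf

/-- Under the Ewens(θ) distribution on `S_n`, the expected number of cycles equals
`1 + ∑_{i=2}^n θ/(i-1+θ)`, and in particular is at most `2 + θ·log n`. -/
theorem ewens_expected_numCycles (n : ℕ) (hn : 1 ≤ n) (θ : ℝ) (hθ : 0 ≤ θ) :
    (∑ σ : Equiv.Perm (Fin n), ewensWeight n θ σ * (numCycles σ : ℝ))
        = 1 + ∑ i ∈ Finset.Icc 2 n, θ / ((i : ℝ) - 1 + θ) ∧
      (∑ σ : Equiv.Perm (Fin n), ewensWeight n θ σ * (numCycles σ : ℝ))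
        ≤ 2 + θ * Real.log n := by
  obtain ⟨m, rfl⟩ := Nat.exists_eq_add_of_le' hn
  have hZ : 0 < ∏ i ∈ range m, (θ + (i + 1 : ℕ)) := prod_pos fun i _ => by positivity
  have hmean : ∑ σ : Perm (Fin (m + 1)), ewensWeight (m + 1) θ σ * numCycles σ =
      1 + ∑ i ∈ range m, θ / (θ + (i + 1 : ℕ)) := by
    simp only [ewensWeight, Nat.add_sub_cancel, div_mul_eq_mul_div, ← sum_div, mul_comm (θ ^ _)]
    rw [sum_numCycles_mul_pow_numCycles_sub_one hθ, mul_div_cancel_left₀ _ hZ.ne']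
  have hlog : Real.log m ≤ Real.log (m + 1 : ℕ) := by
    rcases m.eq_zero_or_pos with rfl | hm
    · simp
    · exact Real.log_le_log (by positivity) (by simp)
  rw [sum_Icc_two_div_sub_one_add, hmean]
  refine ⟨rfl, ?_⟩
  linarith [sum_div_add_le_one_add_mul_log hθ m, mul_le_mul_of_nonneg_left hlog hθ]
end

section
/- For any permutation σ ∈ S_n, #_1(σ²) ≥ 6·#(σ) − 3·#_1(σ) − 2n, where #_1 denotes the number of fixed points and # the number of cycles. -/
open Finset
open scoped Classical

/-- The number of fixed points of `σ`. -/
noncomputable def numFixedPoints {n : ℕ} (σ : Equiv.Perm (Fin n)) : ℕ :=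
  (Finset.univ.filter fun x => σ x = x).card

/-! The inequality is a sum of contributions of the individual cycles of `σ`: a cycle of
length `ℓ` contributes `6 - 3·[ℓ = 1] - 2ℓ` to the left-hand side and `[ℓ = 1] + 2·[ℓ = 2]`
fixed points to `σ²`, and these compare correctly (with equality for `ℓ = 1, 2, 3`). -/

theorem Multiset.three_mul_card_le_sum_add_count_two (s : Multiset ℕ) (hs : ∀ a ∈ s, 2 ≤ a) :
    3 * Multiset.card s ≤ s.sum + s.count 2 := by
  induction s using Multiset.induction_on with
  | empty => simp
  | cons a s ih =>
    have ha := hs a (Multiset.mem_cons_self a s)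
    have := ih fun b hb => hs b (Multiset.mem_cons_of_mem hb)
    rw [Multiset.card_cons, Multiset.sum_cons, Multiset.count_cons]
    split_ifs <;> omega

namespace Equiv.Perm

variable {α : Type*} [Fintype α] [DecidableEq α] (σ : Perm α)

theorem pow_two_apply_eq_self_of_card_support_cycleOf_eq_two {x : α}
    (h : #(σ.cycleOf x).support = 2) : (σ ^ 2) x = x := by
  simpa [h] using (σ.pow_mod_card_support_cycleOf_self_apply 2 x).symm

theorem card_support_pow_two_add_two_mul_count_two_le :
    #(σ ^ 2).support + 2 * σ.cycleType.count 2 ≤ #σ.support := by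
  set T := σ.cycleFactorsFinset.filter fun c => #c.support = 2
  have hcount : σ.cycleType.count 2 = #T := by
    rw [cycleType_def, Multiset.count_map, Finset.card_def, Finset.filter_val]
    simp [eq_comm]
  have hdisj : (T : Set (Perm α)).PairwiseDisjoint support := fun c hc d hd hcd =>
    (σ.cycleFactorsFinset_pairwise_disjoint (mem_filter.mp hc).1 (mem_filter.mp hd).1
      hcd).disjoint_support
  have hcard : #(T.biUnion support) = 2 * #T := by
    rw [card_biUnion hdisj, sum_congr rfl fun c hc => (mem_filter.mp hc).2, sum_const,
      smul_eq_mul, mul_comm]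
  have hsub : T.biUnion support ⊆ σ.support \ (σ ^ 2).support := by
    intro x hx
    obtain ⟨c, hc, hxc⟩ := mem_biUnion.mp hx
    obtain ⟨hcσ, hc2⟩ := mem_filter.mp hc
    rw [cycle_is_cycleOf hxc hcσ] at hc2
    exact mem_sdiff.mpr ⟨mem_cycleFactorsFinset_support_le hcσ hxc,
      notMem_support.mpr (σ.pow_two_apply_eq_self_of_card_support_cycleOf_eq_two hc2)⟩
  have := card_le_card hsub
  rw [card_sdiff_of_subset (support_pow_le σ 2), hcard] at this
  have := card_le_card (support_pow_le σ 2)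
  omega

end Equiv.Perm

theorem numFixedPoints_add_card_support {n : ℕ} (σ : Equiv.Perm (Fin n)) :
    numFixedPoints σ + #σ.support = n := by
  have := card_filter_add_card_filter_not (s := univ) fun x => σ x = x
  rwa [card_univ, Fintype.card_fin] at this

/-- `#₁(σ²) ≥ 6·#(σ) − 3·#₁(σ) − 2n`. -/
theorem fixedPoints_sq_ge {n : ℕ} (σ : Equiv.Perm (Fin n)) :
    (6 : ℤ) * numCycles σ - 3 * numFixedPoints σ - 2 * n
      ≤ (numFixedPoints (σ * σ) : ℤ) := by
  have hcycles : numCycles σ = σ.cycleType.card + numFixedPoints σ := rfl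
  have hσ := numFixedPoints_add_card_support σ
  have hσσ := numFixedPoints_add_card_support (σ * σ)
  have hsq := σ.card_support_pow_two_add_two_mul_count_two_le
  have hlen := σ.cycleType.three_mul_card_le_sum_add_count_two
    fun _ => Equiv.Perm.two_le_of_mem_cycleType
  rw [Equiv.Perm.sum_cycleType] at hlen
  rw [sq] at hsq
  omega
end

section
/- If σ_n is a conjugation-invariant random permutation of S_n (its law is invariant under σ_n ↦ σ⁻¹σ_nσ for every σ ∈ S_n), and T is the Markov operator that, given a realization with more than one cycle, composes it with a uniformly random transposition (i,j) where j is not in the cycle of i (and fixes one-cycle permutations), then T^{n−1}(σ_n) is uniformly distributed on the set of n-cycles of S_n. -/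
open Finset
open scoped Classical

/-- The transition matrix of the Markov chain `T`: from a permutation `σ` with more
than one cycle, choose a couple `(i,j)` uniformly among those with `j` not in the
cycle of `σ` containing `i`, and move to `σ ∘ (i,j)`; permutations with a single
cycle are fixed. -/
noncomputable def stepMat (n : ℕ) (σ ρ : Equiv.Perm (Fin n)) : ℝ :=
  if numCycles σ = 1 then (if ρ = σ then 1 else 0)
  else ((Finset.univ.filter (fun p : Fin n × Fin n =>
      ¬ σ.SameCycle p.1 p.2 ∧ ρ = σ * Equiv.swap p.1 p.2)).card : ℝ) /
    ((Finset.univ.filter (fun p : Fin n × Fin n => ¬ σ.SameCycle p.1 p.2)).card : ℝ)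

/-- One step of the Markov chain applied to a distribution `μ` on `S_n`. -/
noncomputable def evolve (n : ℕ) (μ : Equiv.Perm (Fin n) → ℝ) :
    Equiv.Perm (Fin n) → ℝ :=
  fun ρ => ∑ σ : Equiv.Perm (Fin n), μ σ * stepMat n σ ρ

/-!
Multiplying `σ` by a transposition `(i j)` with `i` and `j` in different cycles merges those two
cycles, so each step of the chain lowers the number of cycles by exactly one until it reaches `1`,
and after `n - 1` steps the law is carried by the `n`-cycles. Conjugation by `τ` carries the
admissible transpositions of `σ` onto those of `τ⁻¹ * σ * τ`, so the chain commutes with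
conjugation and the law stays conjugation invariant. Finally, the `n`-cycles form a single
conjugacy class, on which a conjugation-invariant law is uniform.
-/

namespace Equiv.Perm

section SameCycle

variable {α : Type*} {σ τ : Perm α} {x y : α}

theorem SameCycle.apply_eq_of_invariant {β : Type*} {f : α → β} (hf : ∀ z, f (σ z) = f z)
    (h : σ.SameCycle x y) : f x = f y := by
  obtain ⟨k, rfl⟩ := h
  induction k using Int.induction_on generalizing x with
  | zero => rfl
  | succ k ih => rw [zpow_add_one, mul_apply, ← ih, hf]
  | pred k ih => rw [zpow_sub_one, mul_apply, ← ih, ← hf (σ⁻¹ x), coe_inv, apply_symm_apply]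

theorem sameCycle_inv_mul_mul_iff :
    (τ⁻¹ * σ * τ).SameCycle x y ↔ σ.SameCycle (τ x) (τ y) := by
  simpa using sameCycle_conj (g := τ⁻¹) (f := σ)

theorem inv_mul_mul_eq_inv_mul_mul_mul_swap_iff [DecidableEq α] {ρ : Perm α} :
    τ⁻¹ * ρ * τ = τ⁻¹ * σ * τ * swap x y ↔ ρ = σ * swap (τ x) (τ y) := by
  rw [show τ⁻¹ * σ * τ * swap x y = τ⁻¹ * (σ * (τ * swap x y * τ⁻¹)) * τ by group,
    ← swap_apply_apply]
  exact (MulAut.conj τ⁻¹).injective.eq_iff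

end SameCycle

variable {α : Type*} [Fintype α] [DecidableEq α] {σ : Perm α} {i j x y : α}

def cycleClass (σ : Perm α) (x : α) : Finset α := {y | σ.SameCycle x y}

theorem mem_cycleClass : y ∈ σ.cycleClass x ↔ σ.SameCycle x y := by
  simp [cycleClass]

theorem mem_cycleClass_self (σ : Perm α) (x : α) : x ∈ σ.cycleClass x :=
  mem_cycleClass.2 .rfl

theorem cycleClass_eq_cycleClass_iff : σ.cycleClass x = σ.cycleClass y ↔ σ.SameCycle x y := by
  refine ⟨fun h => mem_cycleClass.1 (h ▸ mem_cycleClass_self σ y), fun h => ?_⟩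
  ext z
  simp only [mem_cycleClass]
  exact ⟨h.symm.trans, h.trans⟩

theorem cycleClass_apply (σ : Perm α) (x : α) : σ.cycleClass (σ x) = σ.cycleClass x :=
  cycleClass_eq_cycleClass_iff.2 (sameCycle_apply_left.2 .rfl)

theorem cycleClass_eq_of_mem (h : y ∈ σ.cycleClass x) : σ.cycleClass y = σ.cycleClass x :=
  cycleClass_eq_cycleClass_iff.2 (mem_cycleClass.1 h).symm

/-- Before returning to `i`, the orbit of `j` under `σ * swap i j` follows the orbit of `σ i`
under `σ`, since the swap only acts on the points `i` and `j`. -/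
theorem sameCycle_mul_swap_self (h : ¬σ.SameCycle i j) : (σ * swap i j).SameCycle j i := by
  set m := Function.minimalPeriod σ i
  have hm : 0 < m :=
    Function.minimalPeriod_pos_of_mem_periodicPts (σ.injective.mem_periodicPts i)
  have key : ∀ k, k < m → ((σ * swap i j) ^ (k + 1)) j = (σ ^ (k + 1)) i := by
    intro k
    induction k with
    | zero => simp
    | succ k ih =>
      intro hk
      have hi : (σ ^ (k + 1)) i ≠ i := by
        rw [coe_pow]
        exact Function.not_isPeriodicPt_of_pos_of_lt_minimalPeriod k.succ_ne_zero hk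
      have hj : (σ ^ (k + 1)) i ≠ j := fun hj => h ⟨(k + 1 : ℕ), by rwa [zpow_natCast]⟩
      rw [pow_succ' _ (k + 1), mul_apply, ih (by omega), mul_apply,
        swap_apply_of_ne_of_ne hi hj, pow_succ' σ (k + 1), mul_apply]
  have hmj := key (m - 1) (by omega)
  rw [Nat.sub_add_cancel hm] at hmj
  refine ⟨m, ?_⟩
  rw [zpow_natCast, hmj, coe_pow, Function.iterate_minimalPeriod]

theorem SameCycle.mul_swap (h : ¬σ.SameCycle i j) (hxy : σ.SameCycle x y) :
    (σ * swap i j).SameCycle x y := by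
  have hji := sameCycle_mul_swap_self h
  have step : ∀ z, (σ * swap i j).cycleClass (σ z) = (σ * swap i j).cycleClass z := by
    intro z
    have hσz : σ z = (σ * swap i j) (swap i j z) := by simp
    rw [cycleClass_eq_cycleClass_iff, hσz, sameCycle_apply_left]
    by_cases hzi : z = i
    · rwa [hzi, swap_apply_left]
    by_cases hzj : z = j
    · rw [hzj, swap_apply_right]; exact hji.symm
    · rw [swap_apply_of_ne_of_ne hzi hzj]
  exact cycleClass_eq_cycleClass_iff.1 (hxy.apply_eq_of_invariant step)

theorem cycleClass_mul_swap (h : ¬σ.SameCycle i j) (x : α) :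
    (σ * swap i j).cycleClass x =
      if x ∈ σ.cycleClass i ∪ σ.cycleClass j then σ.cycleClass i ∪ σ.cycleClass j
      else σ.cycleClass x := by
  set AB := σ.cycleClass i ∪ σ.cycleClass j
  set m : α → Finset α := fun z => if z ∈ AB then AB else σ.cycleClass z
  have hmσ : ∀ z, m (σ z) = m z := by
    simp [m, AB, mem_cycleClass, sameCycle_apply_right, cycleClass_apply]
  have hmswap : ∀ z, m (swap i j z) = m z := by
    have hi : m i = AB := if_pos (mem_union_left _ (mem_cycleClass_self σ i))
    have hj : m j = AB := if_pos (mem_union_right _ (mem_cycleClass_self σ j))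
    intro z
    rw [swap_apply_def]
    split_ifs with hzi hzj
    · rw [hj, hzi, hi]
    · rw [hi, hzj, hj]
    · rfl
  have hmτ : ∀ z, m ((σ * swap i j) z) = m z := fun z => by rw [mul_apply, hmσ, hmswap]
  have hAB : ∀ u ∈ AB, (σ * swap i j).SameCycle i u := by
    intro u hu
    rcases mem_union.1 hu with hu | hu
    · exact (mem_cycleClass.1 hu).mul_swap h
    · exact (sameCycle_mul_swap_self h).symm.trans ((mem_cycleClass.1 hu).mul_swap h)
  ext y
  rw [mem_cycleClass]
  constructor
  · intro hxy
    change y ∈ m x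
    rw [hxy.apply_eq_of_invariant hmτ]
    dsimp only [m]
    split_ifs with hy
    exacts [hy, mem_cycleClass_self σ y]
  · intro hy
    split_ifs at hy with hx
    · exact (hAB x hx).symm.trans (hAB y hy)
    · exact (mem_cycleClass.1 hy).mul_swap h

theorem card_image_cycleClass_mul_swap (h : ¬σ.SameCycle i j) :
    #(univ.image (σ * swap i j).cycleClass) + 1 = #(univ.image σ.cycleClass) := by
  set S := univ.image σ.cycleClass
  set A := σ.cycleClass i
  set B := σ.cycleClass j
  have hAB : A ≠ B := fun hAB => h (cycleClass_eq_cycleClass_iff.1 hAB)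
  have hA : A ∈ S := mem_image_of_mem _ (mem_univ i)
  have hB : B ∈ S := mem_image_of_mem _ (mem_univ j)
  have hnew : A ∪ B ∉ S := by
    simp only [S, mem_image, mem_univ, true_and, not_exists]
    intro x hx
    have hi := mem_cycleClass.1 (hx ▸ mem_union_left B (mem_cycleClass_self σ i))
    have hj := mem_cycleClass.1 (hx ▸ mem_union_right A (mem_cycleClass_self σ j))
    exact h (hi.symm.trans hj)
  have himage : univ.image (σ * swap i j).cycleClass = insert (A ∪ B) ((S.erase A).erase B) := by
    ext C
    simp only [S, mem_image, mem_univ, true_and, mem_insert, mem_erase, cycleClass_mul_swap h]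
    constructor
    · rintro ⟨x, rfl⟩
      split_ifs with hx
      · exact .inl rfl
      · refine .inr ⟨fun hxB => hx ?_, fun hxA => hx ?_, x, rfl⟩
        · exact mem_union_right A (hxB ▸ mem_cycleClass_self σ x : x ∈ B)
        · exact mem_union_left B (hxA ▸ mem_cycleClass_self σ x : x ∈ A)
    · rintro (rfl | ⟨hCB, hCA, x, rfl⟩)
      · exact ⟨i, if_pos (mem_union_left B (mem_cycleClass_self σ i))⟩
      · refine ⟨x, if_neg fun hx => ?_⟩
        rcases mem_union.1 hx with hx | hx
        exacts [hCA (cycleClass_eq_of_mem hx), hCB (cycleClass_eq_of_mem hx)]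
  have hS : 2 ≤ #S := one_lt_card.2 ⟨A, hA, B, hB, hAB⟩
  rw [himage, card_insert_of_notMem fun hmem => hnew (mem_of_mem_erase (mem_of_mem_erase hmem)),
    card_erase_of_mem (mem_erase.2 ⟨hAB.symm, hB⟩), card_erase_of_mem hA]
  omega

theorem cycleClass_of_apply_eq (hx : σ x = x) : σ.cycleClass x = {x} := by
  ext y
  rw [mem_cycleClass, mem_singleton]
  exact ⟨fun h => (h.eq_of_left hx).symm, fun h => h ▸ .rfl⟩

theorem cycleClass_of_apply_ne (hx : σ x ≠ x) : σ.cycleClass x = (σ.cycleOf x).support := by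
  ext y
  rw [mem_cycleClass, mem_support_cycleOf_iff' hx]

theorem image_support_cycleClass (σ : Perm α) :
    σ.support.image σ.cycleClass = σ.cycleFactorsFinset.image support := by
  ext C
  simp only [mem_image]
  constructor
  · rintro ⟨x, hx, rfl⟩
    exact ⟨σ.cycleOf x, cycleOf_mem_cycleFactorsFinset_iff.2 hx,
      (cycleClass_of_apply_ne (mem_support.1 hx)).symm⟩
  · rintro ⟨c, hc, rfl⟩
    obtain ⟨a, ha⟩ := (mem_cycleFactorsFinset_iff.1 hc).1.nonempty_support
    have haσ := mem_cycleFactorsFinset_support_le hc ha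
    exact ⟨a, haσ, by rw [cycleClass_of_apply_ne (mem_support.1 haσ), ← cycle_is_cycleOf ha hc]⟩

theorem card_image_support_cycleClass (σ : Perm α) :
    #(σ.support.image σ.cycleClass) = Multiset.card σ.cycleType := by
  rw [image_support_cycleClass, cycleType_def, Multiset.card_map, card_image_of_injOn]
  · rfl
  intro c hc d hd hcd
  obtain ⟨a, ha⟩ := (mem_cycleFactorsFinset_iff.1 hc).1.nonempty_support
  have hd' : a ∈ d.support := (show c.support = d.support from hcd) ▸ ha
  rw [cycle_is_cycleOf ha hc, cycle_is_cycleOf hd' hd]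

theorem card_image_cycleClass (σ : Perm α) :
    #(univ.image σ.cycleClass) = Multiset.card σ.cycleType + #{x | σ x = x} := by
  set F : Finset α := {x | σ x = x}
  have hF : F.image σ.cycleClass = F.image ({·}) :=
    image_congr fun x hx => cycleClass_of_apply_eq (mem_filter.1 hx).2
  have hdisj : _root_.Disjoint (σ.support.image σ.cycleClass) (F.image σ.cycleClass) := by
    rw [hF, disjoint_left]
    simp only [F, mem_image, mem_filter, mem_univ, true_and, mem_support]
    rintro _ ⟨x, hx, rfl⟩ ⟨y, hy, hxy⟩
    have : x ∈ ({y} : Finset α) := hxy ▸ mem_cycleClass_self σ x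
    exact hx (mem_singleton.1 this ▸ hy)
  have huniv : univ = σ.support ∪ F := by
    ext x
    simpa [F, mem_support] using em' (σ x = x)
  rw [huniv, image_union, card_union_of_disjoint hdisj, card_image_support_cycleClass, hF,
    card_image_of_injective _ singleton_injective]

end Equiv.Perm

open Equiv Equiv.Perm

section NumCycles

variable {n : ℕ} {σ τ : Perm (Fin n)}

theorem numCycles_eq_card_image_cycleClass (σ : Perm (Fin n)) :
    numCycles σ = #(univ.image σ.cycleClass) :=
  (card_image_cycleClass σ).symm

theorem numCycles_eq_card_parts (σ : Perm (Fin n)) :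
    numCycles σ = Multiset.card σ.partition.parts := by
  have hfixed : #{x | σ x = x} + #σ.support = n := by
    simpa [support] using card_filter_add_card_filter_not (s := univ) (fun x => σ x = x)
  rw [numCycles, parts_partition, Multiset.card_add, Multiset.card_replicate, Fintype.card_fin]
  omega

theorem numCycles_pos (hn : 1 ≤ n) (σ : Perm (Fin n)) : 0 < numCycles σ := by
  rw [numCycles_eq_card_image_cycleClass]
  exact card_pos.2 (image_nonempty.2 (univ_nonempty_iff.2 ⟨⟨0, hn⟩⟩))

theorem numCycles_le (σ : Perm (Fin n)) : numCycles σ ≤ n := by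
  rw [numCycles_eq_card_image_cycleClass]
  exact card_image_le.trans_eq (card_fin n)

theorem numCycles_mul_swap {i j : Fin n} (h : ¬σ.SameCycle i j) :
    numCycles (σ * swap i j) + 1 = numCycles σ := by
  simp only [numCycles_eq_card_image_cycleClass, card_image_cycleClass_mul_swap h]

theorem exists_not_sameCycle (hn : 1 ≤ n) (h : numCycles σ ≠ 1) :
    ∃ i j, ¬σ.SameCycle i j := by
  have h2 : 1 < #(univ.image σ.cycleClass) := by
    have := numCycles_pos hn σ
    rw [numCycles_eq_card_image_cycleClass] at this h
    omega
  obtain ⟨_, hC, _, hD, hCD⟩ := one_lt_card.1 h2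
  obtain ⟨i, -, rfl⟩ := mem_image.1 hC
  obtain ⟨j, -, rfl⟩ := mem_image.1 hD
  exact ⟨i, j, fun hij => hCD (cycleClass_eq_cycleClass_iff.2 hij)⟩

theorem numCycles_conj (σ τ : Perm (Fin n)) : numCycles (τ⁻¹ * σ * τ) = numCycles σ := by
  have : IsConj σ (τ⁻¹ * σ * τ) := isConj_iff.2 ⟨τ⁻¹, by rw [inv_inv]⟩
  rw [numCycles_eq_card_parts, numCycles_eq_card_parts, partition_eq_of_isConj.1 this]

theorem isConj_of_numCycles_eq_one (hσ : numCycles σ = 1) (hτ : numCycles τ = 1) :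
    IsConj σ τ := by
  have parts_eq : ∀ π : Perm (Fin n), numCycles π = 1 → π.partition.parts = {n} := by
    intro π hπ
    rw [numCycles_eq_card_parts, Multiset.card_eq_one] at hπ
    obtain ⟨a, ha⟩ := hπ
    have hsum := π.partition.parts_sum
    rw [ha, Multiset.sum_singleton, Fintype.card_fin] at hsum
    rw [ha, hsum]
  rw [partition_eq_of_isConj, Nat.Partition.ext_iff, parts_eq σ hσ, parts_eq τ hτ]

end NumCycles

section Chain

variable {n : ℕ}

theorem stepMat_conj (σ ρ τ : Perm (Fin n)) :
    stepMat n (τ⁻¹ * σ * τ) (τ⁻¹ * ρ * τ) = stepMat n σ ρ := by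
  simp only [stepMat, numCycles_conj, mul_left_inj, mul_right_inj]
  congr 3 <;> exact card_equiv (τ.prodCongr τ) fun p => by
    simp [sameCycle_inv_mul_mul_iff, inv_mul_mul_eq_inv_mul_mul_mul_swap_iff]

theorem numCycles_of_stepMat_ne_zero {σ ρ : Perm (Fin n)} (h : stepMat n σ ρ ≠ 0) :
    (numCycles σ = 1 ∧ ρ = σ) ∨ numCycles ρ + 1 = numCycles σ := by
  unfold stepMat at h
  split_ifs at h with hσ hρ
  · exact .inl ⟨hσ, hρ⟩
  · exact absurd rfl h
  · obtain ⟨p, hpρ⟩ := card_ne_zero.1 (Nat.cast_ne_zero.1 (left_ne_zero_of_mul h))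
    obtain ⟨hp, rfl⟩ := (mem_filter.1 hpρ).2
    exact .inr (numCycles_mul_swap hp)

theorem sum_stepMat (hn : 1 ≤ n) (σ : Perm (Fin n)) : ∑ ρ, stepMat n σ ρ = 1 := by
  unfold stepMat
  split_ifs with hσ
  · simp
  set D : Finset (Fin n × Fin n) := {p | ¬σ.SameCycle p.1 p.2}
  have hD : (#D : ℝ) ≠ 0 := by
    obtain ⟨i, j, hij⟩ := exists_not_sameCycle hn hσ
    exact Nat.cast_ne_zero.2 (card_ne_zero.2 ⟨(i, j), mem_filter.2 ⟨mem_univ _, hij⟩⟩)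
  have hfibers := card_eq_sum_card_fiberwise (f := fun p : Fin n × Fin n => σ * swap p.1 p.2)
    (s := D) (t := univ) fun _ _ => mem_univ _
  rw [← sum_div, div_eq_one_iff_eq hD, hfibers, Nat.cast_sum]
  refine sum_congr rfl fun ρ _ => ?_
  simp only [D, filter_filter, eq_comm]

theorem sum_evolve (hn : 1 ≤ n) {μ : Perm (Fin n) → ℝ} (hμ : ∑ σ, μ σ = 1) :
    ∑ ρ, evolve n μ ρ = 1 := by
  simp only [evolve]
  rw [sum_comm]
  simp [← mul_sum, sum_stepMat hn, hμ]

theorem evolve_conj {μ : Perm (Fin n) → ℝ} (hμ : ∀ σ τ : Perm (Fin n), μ (τ⁻¹ * σ * τ) = μ σ)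
    (ρ τ : Perm (Fin n)) : evolve n μ (τ⁻¹ * ρ * τ) = evolve n μ ρ := by
  refine (Fintype.sum_equiv (MulAut.conj τ⁻¹).toEquiv _ _ fun σ => ?_).symm
  change μ σ * stepMat n σ ρ = μ (τ⁻¹ * σ * τ) * stepMat n (τ⁻¹ * σ * τ) (τ⁻¹ * ρ * τ)
  rw [hμ, stepMat_conj]

theorem sum_iterate_evolve (hn : 1 ≤ n) {μ : Perm (Fin n) → ℝ} (hμ : ∑ σ, μ σ = 1) (k : ℕ) :
    ∑ ρ, (evolve n)^[k] μ ρ = 1 :=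
  Function.Iterate.rec (fun ν : Perm (Fin n) → ℝ => ∑ ρ, ν ρ = 1) hμ (fun _ => sum_evolve hn) k

theorem iterate_evolve_conj {μ : Perm (Fin n) → ℝ}
    (hμ : ∀ σ τ : Perm (Fin n), μ (τ⁻¹ * σ * τ) = μ σ) (k : ℕ) (ρ τ : Perm (Fin n)) :
    (evolve n)^[k] μ (τ⁻¹ * ρ * τ) = (evolve n)^[k] μ ρ :=
  Function.Iterate.rec (fun ν : Perm (Fin n) → ℝ => ∀ σ τ : Perm (Fin n), ν (τ⁻¹ * σ * τ) = ν σ)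
    hμ (fun _ => evolve_conj) k ρ τ

theorem numCycles_le_of_iterate_evolve_ne_zero {μ : Perm (Fin n) → ℝ} {k : ℕ} {ρ : Perm (Fin n)}
    (h : (evolve n)^[k] μ ρ ≠ 0) : numCycles ρ ≤ max 1 (n - k) := by
  induction k generalizing ρ with
  | zero => exact (numCycles_le ρ).trans (le_max_right _ _)
  | succ k ih =>
    rw [Function.iterate_succ_apply'] at h
    obtain ⟨σ, -, hσ⟩ := exists_ne_zero_of_sum_ne_zero h
    have hσk := ih (left_ne_zero_of_mul hσ)
    rcases numCycles_of_stepMat_ne_zero (right_ne_zero_of_mul hσ) with ⟨hσ1, rfl⟩ | hρσ <;> omega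

theorem eq_uniform_of_numCycles_eq_one {ν : Perm (Fin n) → ℝ} (hsum : ∑ σ, ν σ = 1)
    (hconj : ∀ σ τ : Perm (Fin n), ν (τ⁻¹ * σ * τ) = ν σ)
    (hsupp : ∀ σ, ν σ ≠ 0 → numCycles σ = 1) (ρ : Perm (Fin n)) :
    ν ρ = if numCycles ρ = 1 then 1 / (#{π : Perm (Fin n) | numCycles π = 1} : ℝ) else 0 := by
  split_ifs with hρ
  · set F : Finset (Perm (Fin n)) := {π | numCycles π = 1}
    have hconst : ∀ π ∈ F, ν π = ν ρ := by
      intro π hπ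
      obtain ⟨c, rfl⟩ := isConj_iff.1 (isConj_of_numCycles_eq_one (mem_filter.1 hπ).2 hρ)
      simpa using (hconj π c⁻¹).symm
    have hF : ∑ π ∈ F, ν π = 1 := by
      rw [← hsum]
      refine sum_subset (subset_univ F) fun σ _ hσ => ?_
      by_contra h
      exact hσ (mem_filter.2 ⟨mem_univ σ, hsupp σ h⟩)
    rw [sum_congr rfl hconst, sum_const, nsmul_eq_mul] at hF
    exact eq_one_div_of_mul_eq_one_right hF
  · by_contra h
    exact hρ (hsupp ρ h)

end Chain

theorem evolve_iterate_eq_uniform_cyclic_general (n : ℕ) (hn : 1 ≤ n)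
    (μ : Equiv.Perm (Fin n) → ℝ)
    (hsum : ∑ σ : Equiv.Perm (Fin n), μ σ = 1)
    (hinv : ∀ σ τ : Equiv.Perm (Fin n), μ (τ⁻¹ * σ * τ) = μ σ) :
    ∀ ρ : Equiv.Perm (Fin n), (evolve n)^[n - 1] μ ρ =
      if numCycles ρ = 1 then
        (1 : ℝ) / ((Finset.univ.filter fun π : Equiv.Perm (Fin n) =>
          numCycles π = 1).card : ℝ)
      else 0 := by
  refine eq_uniform_of_numCycles_eq_one (sum_iterate_evolve hn hsum _) (iterate_evolve_conj hinv _)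
    fun σ hσ => ?_
  have := numCycles_le_of_iterate_evolve_ne_zero hσ
  have := numCycles_pos hn σ
  omega

/-- If `μ` is a conjugation-invariant probability distribution on `S_n`, then after
`n-1` steps of the chain `T` the distribution is uniform on the set of `n`-cycles. -/
theorem evolve_iterate_eq_uniform_cyclic (n : ℕ) (hn : 1 ≤ n)
    (μ : Equiv.Perm (Fin n) → ℝ) (hpos : ∀ σ, 0 ≤ μ σ)
    (hsum : ∑ σ : Equiv.Perm (Fin n), μ σ = 1)
    (hinv : ∀ σ τ : Equiv.Perm (Fin n), μ (τ⁻¹ * σ * τ) = μ σ) :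
    ∀ ρ : Equiv.Perm (Fin n), (evolve n)^[n - 1] μ ρ =
      if numCycles ρ = 1 then
        (1 : ℝ) / ((Finset.univ.filter fun π : Equiv.Perm (Fin n) =>
          numCycles π = 1).card : ℝ)
      else 0 :=
  evolve_iterate_eq_uniform_cyclic_general n hn μ hsum hinv
end
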